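/- Let K = 6, let p_k = 1 − (k−1)/10 for k = 1, …, 6 (so the pricing classes have probabilities 1, 0.9, 0.8, 0.7, 0.6, 0.5), and let q = (0.183, 0.075, 0.075, 0.175, 0.261, 0.231). Then for all N, W ≥ 0: N·Σ_{k=1}^{6} q_k p_k (1 − p_k) + W·Σ_{k=1}^{6} q_k p_k (1 − p_k)( q_k p_k + 2 Σ_{ℓ=1}^{k−1} q_ℓ p_ℓ ) ≥ 0.7032 · (N + W)/4. Consequently, for every undirected social network G there exists a marketing strategy (π, p) with p_i ∈ {1, 0.9, 0.8, 0.7, 0.6, 0.5} for every buyer i such that R(π, p) ≥ 0.7032 · R_max(G). -/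
import Mathlib

open Finset

set_option maxHeartbeats 1000000
set_option linter.unusedSectionVars false

/-- The revenue of a marketing strategy `(π, p)` on an undirected social network. -/
noncomputable def revenue {V : Type} [Fintype V] [DecidableEq V]
    (w : V → V → ℝ) (π : V ≃ Fin (Fintype.card V)) (p : V → ℝ) : ℝ :=
  ∑ i, p i * (1 - p i) *
    (w i i + ∑ j ∈ univ.filter (fun j => π j < π i), p j * w j i)

/-- The maximum revenue of an undirected social network. -/
noncomputable def maxRev {V : Type} [Fintype V] [DecidableEq V]
    (w : V → V → ℝ) : ℝ :=
  sSup {r | ∃ (π : V ≃ Fin (Fintype.card V)) (p : V → ℝ),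
    (∀ i, 1/2 ≤ p i ∧ p i ≤ 1) ∧ r = revenue w π p}

/-- The pricing probabilities of the `K = 6` pricing classes:
`p_k = 1 - (k-1)/10`, i.e. `1, 0.9, 0.8, 0.7, 0.6, 0.5` (here `0`-indexed). -/
noncomputable def classP : Fin 6 → ℝ := fun k => 1 - (k : ℕ) / 10

/-- The assignment probabilities `q = (0.183, 0.075, 0.075, 0.175, 0.261, 0.231)`. -/
noncomputable def classQ : Fin 6 → ℝ := ![0.183, 0.075, 0.075, 0.175, 0.261, 0.231]

/-! ### Numeric facts -/

lemma IE_q0 : classQ 0 = 0.183 := rfl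
lemma IE_q1 : classQ 1 = 0.075 := rfl
lemma IE_q2 : classQ 2 = 0.075 := rfl
lemma IE_q3 : classQ 3 = 0.175 := rfl
lemma IE_q4 : classQ 4 = 0.261 := rfl
lemma IE_q5 : classQ 5 = 0.231 := rfl
lemma IE_v0 : ((0 : Fin 6) : ℕ) = 0 := rfl
lemma IE_v1 : ((1 : Fin 6) : ℕ) = 1 := rfl
lemma IE_v2 : ((2 : Fin 6) : ℕ) = 2 := rfl
lemma IE_v3 : ((3 : Fin 6) : ℕ) = 3 := rfl
lemma IE_v4 : ((4 : Fin 6) : ℕ) = 4 := rfl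
lemma IE_v5 : ((5 : Fin 6) : ℕ) = 5 := rfl
lemma IE_p0 : classP 0 = 1 := by norm_num [classP, IE_v0]
lemma IE_p1 : classP 1 = 0.9 := by norm_num [classP, IE_v1]
lemma IE_p2 : classP 2 = 0.8 := by norm_num [classP, IE_v2]
lemma IE_p3 : classP 3 = 0.7 := by norm_num [classP, IE_v3]
lemma IE_p4 : classP 4 = 0.6 := by norm_num [classP, IE_v4]
lemma IE_p5 : classP 5 = 0.5 := by norm_num [classP, IE_v5]

lemma IE_sumQ : ∑ k, classQ k = 1 := by
  rw [Fin.sum_univ_six, IE_q0, IE_q1, IE_q2, IE_q3, IE_q4, IE_q5]; norm_num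

lemma IE_Qnn (k : Fin 6) : 0 ≤ classQ k := by
  match k with
  | 0 => rw [IE_q0]; norm_num
  | 1 => rw [IE_q1]; norm_num
  | 2 => rw [IE_q2]; norm_num
  | 3 => rw [IE_q3]; norm_num
  | 4 => rw [IE_q4]; norm_num
  | 5 => rw [IE_q5]; norm_num

lemma IE_Pmem (k : Fin 6) : classP k ∈ ({1, 0.9, 0.8, 0.7, 0.6, 0.5} : Set ℝ) := by
  match k with
  | 0 => rw [IE_p0]; left; rfl
  | 1 => rw [IE_p1]; right; left; rfl
  | 2 => rw [IE_p2]; right; right; left; rfl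
  | 3 => rw [IE_p3]; right; right; right; left; rfl
  | 4 => rw [IE_p4]; right; right; right; right; left; rfl
  | 5 => rw [IE_p5]; right; right; right; right; right; rfl

/-- Per-buyer multiplier `p (1 - p)` of each class. -/
noncomputable def fP (k : Fin 6) : ℝ := classP k * (1 - classP k)

/-- Diagonal coefficient of the expected revenue. -/
noncomputable def Av : ℝ := ∑ k, classQ k * fP k

/-- Off-diagonal coefficient of the expected revenue. -/
noncomputable def Bv : ℝ := ∑ k, ∑ l, classQ k * classQ l *
  (2 * (if l < k then fP k * classP l else 0) + (if l = k then fP k * classP l else 0))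

lemma IE_Av : Av = 0.17589 := by
  rw [Av, Fin.sum_univ_six]
  simp only [fP, IE_q0, IE_q1, IE_q2, IE_q3, IE_q4, IE_q5,
    IE_p0, IE_p1, IE_p2, IE_p3, IE_p4, IE_p5]
  norm_num

lemma IE_Bv : Bv = 0.175806339 := by
  rw [Bv]
  simp only [Fin.sum_univ_six, fP, Fin.lt_def, Fin.ext_iff,
    IE_v0, IE_v1, IE_v2, IE_v3, IE_v4, IE_v5,
    IE_q0, IE_q1, IE_q2, IE_q3, IE_q4, IE_q5,
    IE_p0, IE_p1, IE_p2, IE_p3, IE_p4, IE_p5]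
  norm_num

lemma IE_part1 : ∀ N W : ℝ, 0 ≤ N → 0 ≤ W →
    N * (∑ k, classQ k * classP k * (1 - classP k)) +
      W * (∑ k, classQ k * classP k * (1 - classP k) *
        (classQ k * classP k +
          2 * ∑ l ∈ univ.filter (fun l => l < k), classQ l * classP l))
      ≥ 0.7032 * (N + W) / 4 := by
  intro N W hN hW
  have e1 : (∑ k, classQ k * classP k * (1 - classP k)) = 0.17589 := by
    rw [Fin.sum_univ_six]
    simp only [IE_q0, IE_q1, IE_q2, IE_q3, IE_q4, IE_q5,
      IE_p0, IE_p1, IE_p2, IE_p3, IE_p4, IE_p5]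
    norm_num
  have e2 : (∑ k, classQ k * classP k * (1 - classP k) *
      (classQ k * classP k +
        2 * ∑ l ∈ univ.filter (fun l => l < k), classQ l * classP l)) = 0.175806339 := by
    simp only [Fin.sum_univ_six, Finset.sum_filter, Fin.lt_def,
      IE_v0, IE_v1, IE_v2, IE_v3, IE_v4, IE_v5,
      IE_q0, IE_q1, IE_q2, IE_q3, IE_q4, IE_q5,
      IE_p0, IE_p1, IE_p2, IE_p3, IE_p4, IE_p5]
    norm_num
  rw [e1, e2]; nlinarith

/-! ### Marginalization of the random class assignment -/

variable {V : Type} [Fintype V] [DecidableEq V]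

lemma sum_weight_mul (h : V → Fin 6 → ℝ) :
    ∑ c : V → Fin 6, ∏ v, h v (c v) = ∏ v, ∑ k, h v k := by
  rw [Finset.prod_univ_sum, ← Fintype.piFinset_univ]

lemma prod_split_one (i : V) (F : V → ℝ) :
    ∏ v, F v = F i * ∏ v ∈ univ.erase i, F v :=
  (Finset.mul_prod_erase univ F (mem_univ i)).symm

lemma prod_split_two {i j : V} (hij : i ≠ j) (F : V → ℝ) :
    ∏ v, F v = F i * F j * ∏ v ∈ (univ.erase i).erase j, F v := by
  rw [prod_split_one i F,
    ← Finset.mul_prod_erase (univ.erase i) F (Finset.mem_erase.2 ⟨hij.symm, mem_univ j⟩), mul_assoc]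

lemma weight_nonneg (c : V → Fin 6) : 0 ≤ ∏ v, classQ (c v) :=
  Finset.prod_nonneg fun v _ => IE_Qnn (c v)

lemma weight_sum_one : ∑ c : V → Fin 6, ∏ v, classQ (c v) = 1 := by
  rw [sum_weight_mul (fun _ k => classQ k)]
  rw [Finset.prod_congr rfl fun v _ => IE_sumQ, Finset.prod_const, one_pow]

lemma marg1 (i : V) (g : Fin 6 → ℝ) :
    ∑ c : V → Fin 6, (∏ v, classQ (c v)) * g (c i) = ∑ k, classQ k * g k := by
  calc ∑ c : V → Fin 6, (∏ v, classQ (c v)) * g (c i)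
      = ∑ c : V → Fin 6, ∏ v, (fun v k => if v = i then classQ k * g k else classQ k) v (c v) := by
        refine Finset.sum_congr rfl fun c _ => ?_
        rw [prod_split_one i (fun v => classQ (c v)),
          prod_split_one i (fun v => (fun v k => if v = i then classQ k * g k else classQ k) v (c v))]
        simp only [eq_self_iff_true, if_true]
        rw [Finset.prod_congr rfl (fun v hv => if_neg (Finset.mem_erase.1 hv).1)]
        ring
    _ = ∏ v, ∑ k, (fun v k => if v = i then classQ k * g k else classQ k) v k :=
        sum_weight_mul (fun v k => if v = i then classQ k * g k else classQ k)
    _ = ∑ k, classQ k * g k := by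
        rw [prod_split_one i]
        simp only [eq_self_iff_true, if_true]
        have h2 : ∀ v ∈ univ.erase i,
            (∑ k, if v = i then classQ k * g k else classQ k) = 1 := fun v hv => by
          rw [Finset.sum_congr rfl fun k _ => if_neg (Finset.mem_erase.1 hv).1, IE_sumQ]
        rw [Finset.prod_congr rfl h2, Finset.prod_const, one_pow, mul_one]

lemma marg2 {i j : V} (hij : i ≠ j) (g : Fin 6 → Fin 6 → ℝ) :
    ∑ c : V → Fin 6, (∏ v, classQ (c v)) * g (c i) (c j)
      = ∑ k, ∑ l, classQ k * classQ l * g k l := by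
  have hji : j ≠ i := hij.symm
  have step1 : ∀ c : V → Fin 6, (∏ v, classQ (c v)) * g (c i) (c j)
      = ∑ k, ∑ l, ∏ v, (fun (v : V) (m : Fin 6) => if v = i then (if m = k then classQ m * g k l else 0)
          else if v = j then (if m = l then classQ m else 0) else classQ m) v (c v) := by
    intro c
    have inner : ∀ k l : Fin 6, (∏ v, (fun (v : V) (m : Fin 6) => if v = i then (if m = k then classQ m * g k l else 0)
          else if v = j then (if m = l then classQ m else 0) else classQ m) v (c v))
        = if c i = k then (if c j = l then (∏ v, classQ (c v)) * g k l else 0) else 0 := by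
      intro k l
      rw [prod_split_two hij (fun v => (fun (v : V) (m : Fin 6) => if v = i then (if m = k then classQ m * g k l else 0)
          else if v = j then (if m = l then classQ m else 0) else classQ m) v (c v)),
        prod_split_two hij (fun v => classQ (c v))]
      simp only [eq_self_iff_true, if_true, if_neg hji]
      rw [Finset.prod_congr rfl (fun v hv => by
        obtain ⟨hvj, hvi⟩ := Finset.mem_erase.1 hv
        rw [if_neg (Finset.mem_erase.1 hvi).1, if_neg hvj])]
      by_cases hk : c i = k <;> by_cases hl : c j = l <;>
        simp [hk, hl] <;> ring
    rw [Finset.sum_congr rfl fun k (_ : k ∈ (univ : Finset (Fin 6))) =>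
      Finset.sum_congr rfl fun l (_ : l ∈ (univ : Finset (Fin 6))) => inner k l]
    have h1 : ∀ k : Fin 6, (∑ l, if c i = k then (if c j = l then (∏ v, classQ (c v)) * g k l else 0) else 0)
        = if c i = k then (∏ v, classQ (c v)) * g k (c j) else 0 := by
      intro k
      by_cases hk : c i = k
      · simp only [if_pos hk]
        rw [Finset.sum_ite_eq univ (c j) (fun l => (∏ v, classQ (c v)) * g k l), if_pos (mem_univ _)]
      · simp [hk]
    rw [Finset.sum_congr rfl fun k _ => h1 k,
      Finset.sum_ite_eq univ (c i) (fun k => (∏ v, classQ (c v)) * g k (c j)), if_pos (mem_univ _)]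
  rw [Finset.sum_congr rfl fun c (_ : c ∈ univ) => step1 c, Finset.sum_comm]
  refine Finset.sum_congr rfl fun k _ => ?_
  rw [Finset.sum_comm]
  refine Finset.sum_congr rfl fun l _ => ?_
  rw [sum_weight_mul (fun (v : V) (m : Fin 6) => if v = i then (if m = k then classQ m * g k l else 0)
      else if v = j then (if m = l then classQ m else 0) else classQ m)]
  rw [prod_split_two hij (fun v => ∑ m, (fun (v : V) (m : Fin 6) => if v = i then (if m = k then classQ m * g k l else 0)
      else if v = j then (if m = l then classQ m else 0) else classQ m) v m)]
  simp only [eq_self_iff_true, if_true, if_neg hji]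
  have h2 : ∀ v ∈ (univ.erase i).erase j,
      (∑ m, if v = i then (if m = k then classQ m * g k l else 0)
          else if v = j then (if m = l then classQ m else 0) else classQ m) = 1 := fun v hv => by
    obtain ⟨hvj, hvi⟩ := Finset.mem_erase.1 hv
    rw [Finset.sum_congr rfl fun m _ => by rw [if_neg (Finset.mem_erase.1 hvi).1, if_neg hvj], IE_sumQ]
  rw [Finset.prod_congr rfl h2, Finset.prod_const, one_pow, mul_one,
    Finset.sum_ite_eq' univ k (fun m => classQ m * g k l), if_pos (mem_univ _),
    Finset.sum_ite_eq' univ l (fun m => classQ m), if_pos (mem_univ _)]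
  ring

/-! ### Symmetrization -/

lemma sym_sum (G : V → V → ℝ) :
    ∑ i, ∑ j, G i j = (1/2) * ∑ i, ∑ j, (G i j + G j i) := by
  have h : ∑ i, ∑ j, G j i = ∑ i, ∑ j, G i j := Finset.sum_comm
  rw [show (∑ i, ∑ j, (G i j + G j i)) = (∑ i, ∑ j, G i j) + ∑ i, ∑ j, G j i by
    rw [← Finset.sum_add_distrib]; exact Finset.sum_congr rfl fun i _ => Finset.sum_add_distrib]
  rw [h]; ring

lemma ordered_half (w : V → V → ℝ) (hsym : ∀ i j, w i j = w j i)
    (π : V ≃ Fin (Fintype.card V)) :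
    ∑ i, ∑ j, (if π j < π i then w j i else 0)
      = (1/2) * ∑ i, ∑ j, (if i = j then 0 else w j i) := by
  rw [sym_sum (fun i j => if π j < π i then w j i else 0)]
  congr 1
  refine Finset.sum_congr rfl fun i _ => Finset.sum_congr rfl fun j _ => ?_
  by_cases hij : i = j
  · subst hij; simp [lt_irrefl]
  · have hππ : π i ≠ π j := fun h => hij (π.injective h)
    rcases lt_or_gt_of_ne hππ with h | h
    · rw [if_neg (asymm h), if_pos h, if_neg hij, hsym i j]; ring
    · rw [if_pos h, if_neg (asymm h), if_neg hij]; ring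

/-! ### Upper bound on the maximum revenue -/

lemma revenue_le (w : V → V → ℝ) (hsym : ∀ i j, w i j = w j i) (hnn : ∀ i j, 0 ≤ w i j)
    (π : V ≃ Fin (Fintype.card V)) (p : V → ℝ) (hp : ∀ i, 1/2 ≤ p i ∧ p i ≤ 1) :
    revenue w π p ≤ ((∑ i, w i i) + (1/2) * ∑ i, ∑ j, (if i = j then 0 else w j i)) / 4 := by
  have key : revenue w π p ≤ (1/4) * ∑ i, (w i i + ∑ j, (if π j < π i then w j i else 0)) := by
    rw [Finset.mul_sum]
    refine Finset.sum_le_sum fun i _ => ?_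
    have h1 : p i * (1 - p i) ≤ 1/4 := by nlinarith [(hp i).1, (hp i).2, sq_nonneg (p i - 1/2)]
    have hinner : (∑ j ∈ univ.filter (fun j => π j < π i), p j * w j i)
        ≤ ∑ j, (if π j < π i then w j i else 0) := by
      rw [Finset.sum_filter]
      refine Finset.sum_le_sum fun j _ => ?_
      by_cases h : π j < π i
      · rw [if_pos h, if_pos h]
        nlinarith [(hp j).1, (hp j).2, hnn j i]
      · rw [if_neg h, if_neg h]
    have hnn2 : 0 ≤ w i i + ∑ j ∈ univ.filter (fun j => π j < π i), p j * w j i := by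
      have : 0 ≤ ∑ j ∈ univ.filter (fun j => π j < π i), p j * w j i :=
        Finset.sum_nonneg fun j _ => by nlinarith [(hp j).1, (hp j).2, hnn j i]
      linarith [hnn i i]
    calc p i * (1 - p i) * (w i i + ∑ j ∈ univ.filter (fun j => π j < π i), p j * w j i)
        ≤ (1/4) * (w i i + ∑ j ∈ univ.filter (fun j => π j < π i), p j * w j i) :=
          mul_le_mul_of_nonneg_right h1 hnn2
      _ ≤ (1/4) * (w i i + ∑ j, (if π j < π i then w j i else 0)) := by linarith
  rw [Finset.sum_add_distrib, ordered_half w hsym π] at key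
  linarith

lemma maxRev_le (w : V → V → ℝ) (hsym : ∀ i j, w i j = w j i) (hnn : ∀ i j, 0 ≤ w i j) :
    maxRev w ≤ ((∑ i, w i i) + (1/2) * ∑ i, ∑ j, (if i = j then 0 else w j i)) / 4 := by
  apply Real.sSup_le
  · rintro r ⟨π, p, hp, rfl⟩
    exact revenue_le w hsym hnn π p hp
  · have h1 : 0 ≤ ∑ i, w i i := Finset.sum_nonneg fun i _ => hnn i i
    have h2 : 0 ≤ ∑ i, ∑ j, (if i = j then 0 else w j i) :=
      Finset.sum_nonneg fun i _ => Finset.sum_nonneg fun j _ => by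
        by_cases h : i = j <;> simp [h, hnn j i]
    linarith

/-! ### Sorting permutation -/

noncomputable def sortEquiv {V : Type} [Fintype V] [DecidableEq V] (key : V → ℕ)
    (hinj : Function.Injective key) : V ≃ Fin (Fintype.card V) :=
  letI : LinearOrder V := LinearOrder.lift' key hinj
  (monoEquivOfFin V rfl).symm.toEquiv

lemma sortEquiv_lt_iff {V : Type} [Fintype V] [DecidableEq V] (key : V → ℕ)
    (hinj : Function.Injective key) (i j : V) :
    sortEquiv key hinj i < sortEquiv key hinj j ↔ key i < key j := by
  letI : LinearOrder V := LinearOrder.lift' key hinj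
  have h : ∀ a b : V, a < b ↔ key a < key b := fun a b => Iff.rfl
  rw [show sortEquiv key hinj = (monoEquivOfFin V rfl).symm.toEquiv from rfl, ← h i j]
  exact (monoEquivOfFin V rfl).symm.lt_iff_lt

def keyF (e : V ≃ Fin (Fintype.card V)) (c : V → Fin 6) : V → ℕ :=
  fun v => (c v).val * Fintype.card V + (e v).val

lemma keyF_inj (e : V ≃ Fin (Fintype.card V)) (c : V → Fin 6) :
    Function.Injective (keyF e c) := by
  intro a b hab
  apply e.injective; apply Fin.ext
  have ha := (e a).isLt; have hb := (e b).isLt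
  have hmod : ∀ x y : ℕ, (x * Fintype.card V + y) % Fintype.card V = y % Fintype.card V :=
    fun x y => by rw [Nat.add_comm, Nat.add_mul_mod_self_right]
  have h2 := congrArg (· % Fintype.card V) hab
  simp only [keyF] at h2
  rwa [hmod, hmod, Nat.mod_eq_of_lt ha, Nat.mod_eq_of_lt hb] at h2

lemma keyF_lt_iff (e : V ≃ Fin (Fintype.card V)) (c : V → Fin 6) (i j : V) :
    keyF e c j < keyF e c i ↔ (c j < c i ∨ (c j = c i ∧ ((e j : ℕ) < (e i : ℕ)))) := by
  have hj := (e j).isLt; have hi := (e i).isLt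
  unfold keyF
  constructor
  · intro h
    rcases lt_trichotomy (c j) (c i) with h1 | h1 | h1
    · exact Or.inl h1
    · refine Or.inr ⟨h1, ?_⟩
      rw [h1] at h
      exact Nat.lt_of_add_lt_add_left h
    · exfalso
      have hv : (c i).val < (c j).val := h1
      have : (c i).val * Fintype.card V + (e i).val < (c j).val * Fintype.card V + (e j).val := by
        calc (c i).val * Fintype.card V + (e i).val
            < (c i).val * Fintype.card V + Fintype.card V := Nat.add_lt_add_left hi _
          _ = ((c i).val + 1) * Fintype.card V := by ring
          _ ≤ (c j).val * Fintype.card V := Nat.mul_le_mul_right _ hv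
          _ ≤ (c j).val * Fintype.card V + (e j).val := Nat.le_add_right _ _
      omega
  · rintro (h1 | ⟨h1, h2⟩)
    · have hv : (c j).val < (c i).val := h1
      calc (c j).val * Fintype.card V + (e j).val
          < (c j).val * Fintype.card V + Fintype.card V := Nat.add_lt_add_left hj _
        _ = ((c j).val + 1) * Fintype.card V := by ring
        _ ≤ (c i).val * Fintype.card V := Nat.mul_le_mul_right _ hv
        _ ≤ (c i).val * Fintype.card V + (e i).val := Nat.le_add_right _ _
    · rw [h1]
      exact Nat.add_lt_add_left h2 _

/-! ### Probabilistic existence -/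

lemma exists_le_avg {ι : Type} [Fintype ι] (q r : ι → ℝ) (hq : ∀ i, 0 ≤ q i)
    (h1 : ∑ i, q i = 1) : ∃ i, ∑ j, q j * r j ≤ r i := by
  by_contra h
  push_neg at h
  obtain ⟨i0, -, hi0⟩ : ∃ i ∈ univ, 0 < q i := by
    by_contra hno; push_neg at hno
    have hz : ∑ i, q i = 0 := Finset.sum_eq_zero fun i hi => le_antisymm (hno i hi) (hq i)
    rw [hz] at h1; norm_num at h1
  have hlt : ∑ j, q j * r j < ∑ j, q j * (∑ j, q j * r j) :=
    Finset.sum_lt_sum (fun j _ => mul_le_mul_of_nonneg_left (h j).le (hq j))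
      ⟨i0, mem_univ _, mul_lt_mul_of_pos_left (h i0) hi0⟩
  rw [← Finset.sum_mul, h1, one_mul] at hlt
  exact lt_irrefl _ hlt

/-! ### The expected revenue -/

/-- Pair coefficient. -/
noncomputable def Dv (e : V ≃ Fin (Fintype.card V)) (w : V → V → ℝ) (i j : V) : ℝ :=
  ∑ k, ∑ l, classQ k * classQ l *
    (if (l < k ∨ (l = k ∧ ((e j : ℕ) < (e i : ℕ)))) then fP k * (classP l * w j i) else 0)

lemma pairD (e : V ≃ Fin (Fintype.card V)) (w : V → V → ℝ) (hsym : ∀ i j, w i j = w j i)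
    {i j : V} (hij : i ≠ j) : Dv e w i j + Dv e w j i = Bv * w j i := by
  have hne : (e i : ℕ) ≠ (e j : ℕ) := fun h => hij (e.injective (Fin.ext h))
  have hw : w i j = w j i := hsym i j
  rw [Dv, Dv, Bv, Finset.sum_mul, ← Finset.sum_add_distrib]
  refine Finset.sum_congr rfl fun k _ => ?_
  rw [Finset.sum_mul, ← Finset.sum_add_distrib]
  refine Finset.sum_congr rfl fun l _ => ?_
  by_cases h1 : l < k
  · have h2 : l ≠ k := ne_of_lt h1
    rw [if_pos (Or.inl h1), if_pos (Or.inl h1), if_pos h1, if_neg h2, hw]; ring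
  · by_cases h2 : l = k
    · by_cases h3 : (e j : ℕ) < (e i : ℕ)
      · have hn : ¬(l < k ∨ (l = k ∧ ((e i : ℕ) < (e j : ℕ)))) := by
          rintro (h | ⟨-, h⟩); exact h1 h; omega
        rw [if_pos (Or.inr ⟨h2, h3⟩), if_neg hn, if_neg h1, if_pos h2]; ring
      · have h3' : (e i : ℕ) < (e j : ℕ) := by omega
        have hn : ¬(l < k ∨ (l = k ∧ ((e j : ℕ) < (e i : ℕ)))) := by
          rintro (h | ⟨-, h⟩); exact h1 h; omega
        rw [if_neg hn, if_pos (Or.inr ⟨h2, h3'⟩), if_neg h1, if_pos h2, hw]; ring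
    · have hn1 : ¬(l < k ∨ (l = k ∧ ((e j : ℕ) < (e i : ℕ)))) := by
        rintro (h | ⟨h, -⟩); exact h1 h; exact h2 h
      have hn2 : ¬(l < k ∨ (l = k ∧ ((e i : ℕ) < (e j : ℕ)))) := by
        rintro (h | ⟨h, -⟩); exact h1 h; exact h2 h
      rw [if_neg hn1, if_neg hn2, if_neg h1, if_neg h2]; ring

lemma rev_eq (w : V → V → ℝ) (e : V ≃ Fin (Fintype.card V)) (c : V → Fin 6) :
    revenue w (sortEquiv (keyF e c) (keyF_inj e c)) (fun i => classP (c i))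
    = (∑ i, fP (c i) * w i i)
      + ∑ i, ∑ j, (if (c j < c i ∨ (c j = c i ∧ ((e j : ℕ) < (e i : ℕ))))
          then fP (c i) * (classP (c j) * w j i) else 0) := by
  unfold revenue
  rw [← Finset.sum_add_distrib]
  refine Finset.sum_congr rfl fun i _ => ?_
  rw [mul_add]
  congr 1
  rw [Finset.mul_sum, Finset.sum_filter]
  refine Finset.sum_congr rfl fun j _ => ?_
  rw [show (if sortEquiv (keyF e c) (keyF_inj e c) j < sortEquiv (keyF e c) (keyF_inj e c) i
        then classP (c i) * (1 - classP (c i)) * (classP (c j) * w j i) else 0)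
      = (if (c j < c i ∨ (c j = c i ∧ ((e j : ℕ) < (e i : ℕ))))
        then fP (c i) * (classP (c j) * w j i) else 0) from
    if_congr ((sortEquiv_lt_iff (keyF e c) (keyF_inj e c) j i).trans (keyF_lt_iff e c i j)) rfl rfl]

lemma expectation_eq (w : V → V → ℝ) (hsym : ∀ i j, w i j = w j i)
    (e : V ≃ Fin (Fintype.card V)) :
    ∑ c : V → Fin 6, (∏ v, classQ (c v)) *
      revenue w (sortEquiv (keyF e c) (keyF_inj e c)) (fun i => classP (c i))
    = Av * (∑ i, w i i) + (Bv / 2) * ∑ i, ∑ j, (if i = j then 0 else w j i) := by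
  rw [Finset.sum_congr rfl fun c (_ : c ∈ univ) => by rw [rev_eq w e c]]
  simp only [mul_add]
  rw [Finset.sum_add_distrib]
  congr 1
  · calc ∑ c : V → Fin 6, (∏ v, classQ (c v)) * ∑ i, fP (c i) * w i i
        = ∑ c : V → Fin 6, ∑ i, (∏ v, classQ (c v)) * (fP (c i) * w i i) := by
          refine Finset.sum_congr rfl fun c _ => Finset.mul_sum _ _ _
      _ = ∑ i, ∑ c : V → Fin 6, (∏ v, classQ (c v)) * (fP (c i) * w i i) := Finset.sum_comm
      _ = ∑ i, ∑ k, classQ k * (fP k * w i i) :=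
          Finset.sum_congr rfl fun i _ => marg1 i (fun k => fP k * w i i)
      _ = ∑ i, Av * w i i := by
          refine Finset.sum_congr rfl fun i _ => ?_
          rw [Av, Finset.sum_mul]
          exact Finset.sum_congr rfl fun k _ => by ring
      _ = Av * ∑ i, w i i := (Finset.mul_sum _ _ _).symm
  · calc ∑ c : V → Fin 6, (∏ v, classQ (c v)) *
          ∑ i, ∑ j, (if (c j < c i ∨ (c j = c i ∧ ((e j : ℕ) < (e i : ℕ))))
            then fP (c i) * (classP (c j) * w j i) else 0)
        = ∑ i, ∑ j, ∑ c : V → Fin 6, (∏ v, classQ (c v)) *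
            (if (c j < c i ∨ (c j = c i ∧ ((e j : ℕ) < (e i : ℕ))))
              then fP (c i) * (classP (c j) * w j i) else 0) := by
          calc ∑ c : V → Fin 6, (∏ v, classQ (c v)) *
              ∑ i, ∑ j, (if (c j < c i ∨ (c j = c i ∧ ((e j : ℕ) < (e i : ℕ))))
                then fP (c i) * (classP (c j) * w j i) else 0)
              = ∑ c : V → Fin 6, ∑ i, ∑ j, (∏ v, classQ (c v)) *
                (if (c j < c i ∨ (c j = c i ∧ ((e j : ℕ) < (e i : ℕ))))
                  then fP (c i) * (classP (c j) * w j i) else 0) := by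
                refine Finset.sum_congr rfl fun c _ => ?_
                rw [Finset.mul_sum]
                exact Finset.sum_congr rfl fun i _ => Finset.mul_sum _ _ _
            _ = ∑ i, ∑ c : V → Fin 6, ∑ j, (∏ v, classQ (c v)) *
                (if (c j < c i ∨ (c j = c i ∧ ((e j : ℕ) < (e i : ℕ))))
                  then fP (c i) * (classP (c j) * w j i) else 0) := Finset.sum_comm
            _ = ∑ i, ∑ j, ∑ c : V → Fin 6, (∏ v, classQ (c v)) *
                (if (c j < c i ∨ (c j = c i ∧ ((e j : ℕ) < (e i : ℕ))))
                  then fP (c i) * (classP (c j) * w j i) else 0) :=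
                Finset.sum_congr rfl fun i _ => Finset.sum_comm
      _ = ∑ i, ∑ j, (if i = j then 0 else Dv e w i j) := by
          refine Finset.sum_congr rfl fun i _ => Finset.sum_congr rfl fun j _ => ?_
          by_cases hij : i = j
          · subst hij
            rw [if_pos rfl]
            refine Finset.sum_eq_zero fun c _ => ?_
            rw [if_neg (by rintro (h | ⟨-, h⟩); exact lt_irrefl _ h; exact lt_irrefl _ h), mul_zero]
          · rw [if_neg hij, Dv]
            exact marg2 hij (fun k l => if (l < k ∨ (l = k ∧ ((e j : ℕ) < (e i : ℕ))))
              then fP k * (classP l * w j i) else 0)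
      _ = (1/2) * ∑ i, ∑ j, (if i = j then 0 else Bv * w j i) := by
          rw [sym_sum (fun i j => if i = j then 0 else Dv e w i j)]
          congr 1
          refine Finset.sum_congr rfl fun i _ => Finset.sum_congr rfl fun j _ => ?_
          by_cases hij : i = j
          · subst hij; simp
          · rw [if_neg hij, if_neg (Ne.symm hij), if_neg hij]
            exact pairD e w hsym hij
      _ = (Bv / 2) * ∑ i, ∑ j, (if i = j then 0 else w j i) := by
          rw [Finset.mul_sum, Finset.mul_sum]
          refine Finset.sum_congr rfl fun i _ => ?_
          rw [Finset.mul_sum, Finset.mul_sum]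
          refine Finset.sum_congr rfl fun j _ => ?_
          by_cases hij : i = j <;> simp [hij] <;> ring

/-- The generalized IE strategy with 6 pricing classes and assignment probabilities
`q = (0.183, 0.075, 0.075, 0.175, 0.261, 0.231)`: its expected-revenue expression is
at least `0.7032 · (N + W)/4` for all `N, W ≥ 0`, and hence for every undirected
social network there is a marketing strategy using only the prices of the six classes
that approximates the maximum revenue within a factor of `0.7032`. -/
theorem generalizedIE_undirected :
    (∀ N W : ℝ, 0 ≤ N → 0 ≤ W →
      N * (∑ k, classQ k * classP k * (1 - classP k)) +
        W * (∑ k, classQ k * classP k * (1 - classP k) *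
          (classQ k * classP k +
            2 * ∑ l ∈ univ.filter (fun l => l < k), classQ l * classP l))
        ≥ 0.7032 * (N + W) / 4) ∧
      ∀ (V : Type) [Fintype V] [DecidableEq V] (w : V → V → ℝ),
        (∀ i j, w i j = w j i) → (∀ i j, 0 ≤ w i j) →
        ∃ (π : V ≃ Fin (Fintype.card V)) (p : V → ℝ),
          (∀ i, p i ∈ ({1, 0.9, 0.8, 0.7, 0.6, 0.5} : Set ℝ)) ∧
          revenue w π p ≥ 0.7032 * maxRev w := by
  refine ⟨IE_part1, ?_⟩
  intro V _ _ w hsym hnn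
  obtain ⟨c, hc⟩ := exists_le_avg (fun c : V → Fin 6 => ∏ v, classQ (c v))
    (fun c => revenue w (sortEquiv (keyF (Fintype.equivFin V) c)
      (keyF_inj (Fintype.equivFin V) c)) (fun i => classP (c i)))
    (fun c => weight_nonneg c) weight_sum_one
  refine ⟨sortEquiv (keyF (Fintype.equivFin V) c) (keyF_inj (Fintype.equivFin V) c),
    fun i => classP (c i), fun i => IE_Pmem (c i), ?_⟩
  have hE := expectation_eq w hsym (Fintype.equivFin V)
  rw [hE] at hc
  have hN : (0:ℝ) ≤ ∑ i, w i i := Finset.sum_nonneg fun i _ => hnn i i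
  have hS : (0:ℝ) ≤ ∑ i, ∑ j, (if i = j then 0 else w j i) :=
    Finset.sum_nonneg fun i _ => Finset.sum_nonneg fun j _ => by
      by_cases h : i = j <;> simp [h, hnn j i]
  have hmax := maxRev_le w hsym hnn
  have hnum : Av * (∑ i, w i i) + (Bv / 2) * (∑ i, ∑ j, (if i = j then 0 else w j i))
      ≥ 0.7032 * (((∑ i, w i i) + (1/2) * ∑ i, ∑ j, (if i = j then 0 else w j i)) / 4) := by
    rw [IE_Av, IE_Bv]; nlinarith
  have h1 : 0.7032 * maxRev w
      ≤ 0.7032 * (((∑ i, w i i) + (1/2) * ∑ i, ∑ j, (if i = j then 0 else w j i)) / 4) :=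
    mul_le_mul_of_nonneg_left hmax (by norm_num)
  calc 0.7032 * maxRev w
      ≤ 0.7032 * (((∑ i, w i i) + (1/2) * ∑ i, ∑ j, (if i = j then 0 else w j i)) / 4) := h1
    _ ≤ Av * (∑ i, w i i) + (Bv / 2) * (∑ i, ∑ j, (if i = j then 0 else w j i)) := hnum
    _ ≤ _ := hc
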